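/- For the map f(x,y) = (x/2, y/2 − sgn(y)x²) on [−1,1]², the n-th iterate on the domain {y > 0} near the origin has first coordinate x/2^n, and the number of continuity domains of f^n whose closure contains the origin is 2^n for every n ≥ 1; hence the multiplicity entropy of f equals log 2. -/

import Mathlib

/-!
Along the parabola `y = 2x²s` the map acts as `(x, 2x²s) ↦ (x/2, 2(x/2)²·g s)` with
`g s = 2(s - sgn s)`, so for `x ≠ 0` the sign itinerary of `(x, 2x²s)` under `f` is that of `s`
under `g`. On `(-2, 2)` both branches of `g` map onto `(-2, 2)`, so every sign word of length `n`
is realised by some `s ∈ (-2, 2)`; letting `x → 0⁺` along the corresponding parabola shows that the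
origin lies in the closure of all `2ⁿ` continuity domains of `f^n`.
-/

/-- The map of Example 5: `(x,y) ↦ (x/2, y/2 − sgn(y)·x²)` on `[−1,1]²`. -/
noncomputable def fBuzzi (p : ℝ × ℝ) : ℝ × ℝ :=
  (p.1 / 2, p.2 / 2 - Real.sign p.2 * p.1 ^ 2)

/-- The continuity domain of `f^n` in `[−1,1]²` with sign itinerary `w`
(`w k = true` meaning the `k`-th iterate has positive second coordinate). -/
def signDom (n : ℕ) (w : Fin n → Bool) : Set (ℝ × ℝ) :=
  {p | |p.1| ≤ 1 ∧ |p.2| ≤ 1 ∧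
    ∀ k : Fin n, if w k then 0 < (fBuzzi^[(k : ℕ)] p).2 else (fBuzzi^[(k : ℕ)] p).2 < 0}

open Filter Topology

noncomputable def signDoubling (s : ℝ) : ℝ := 2 * (s - Real.sign s)

lemma Real.sign_mul_of_pos {c : ℝ} (hc : 0 < c) (s : ℝ) : Real.sign (c * s) = Real.sign s := by
  rcases lt_trichotomy s 0 with hs | rfl | hs
  · rw [Real.sign_of_neg hs, Real.sign_of_neg (mul_neg_of_pos_of_neg hc hs)]
  · rw [mul_zero]
  · rw [Real.sign_of_pos hs, Real.sign_of_pos (mul_pos hc hs)]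

lemma fBuzzi_iterate_fst (p : ℝ × ℝ) (n : ℕ) : (fBuzzi^[n] p).1 = p.1 / 2 ^ n := by
  induction n generalizing p with
  | zero => simp
  | succ n ih =>
    rw [Function.iterate_succ_apply, ih, fBuzzi, pow_succ]
    ring

lemma fBuzzi_parabola {x : ℝ} (hx : x ≠ 0) (s : ℝ) :
    fBuzzi (x, 2 * x ^ 2 * s) = (x / 2, 2 * (x / 2) ^ 2 * signDoubling s) := by
  refine Prod.ext rfl ?_
  simp only [fBuzzi, Real.sign_mul_of_pos (by positivity : (0 : ℝ) < 2 * x ^ 2), signDoubling]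
  ring

lemma fBuzzi_iterate_parabola {x : ℝ} (hx : x ≠ 0) (s : ℝ) (k : ℕ) :
    fBuzzi^[k] (x, 2 * x ^ 2 * s) = (x / 2 ^ k, 2 * (x / 2 ^ k) ^ 2 * signDoubling^[k] s) := by
  induction k generalizing x s with
  | zero => simp
  | succ k ih =>
    rw [Function.iterate_succ_apply, fBuzzi_parabola hx, ih (div_ne_zero hx two_ne_zero),
      Function.iterate_succ_apply, div_div, ← pow_succ']

lemma exists_signDoubling_itinerary (n : ℕ) (w : Fin n → Bool) :
    ∃ s : ℝ, |s| < 2 ∧ ∀ k : Fin n,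
      if w k then 0 < signDoubling^[k] s else signDoubling^[k] s < 0 := by
  induction n with
  | zero => exact ⟨0, by norm_num, fun k => k.elim0⟩
  | succ n ih =>
    obtain ⟨t, ht, htw⟩ := ih (Fin.tail w)
    obtain ⟨ht₁, ht₂⟩ := abs_lt.mp ht
    -- `e + t / 2` is the preimage of `t` under the branch of `signDoubling` of sign `e`.
    set e : ℝ := if w 0 then 1 else -1 with he
    have he_abs : |e| = 1 := by rw [he]; split_ifs <;> norm_num
    have hsign : Real.sign (e + t / 2) = e := by
      rw [he]; split_ifs
      · exact Real.sign_of_pos (by linarith)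
      · exact Real.sign_of_neg (by linarith)
    have hstep : signDoubling (e + t / 2) = t := by
      rw [signDoubling, hsign]; ring
    refine ⟨e + t / 2, ?_, fun k => Fin.cases ?_ (fun k => ?_) k⟩
    · calc |e + t / 2| ≤ |e| + |t / 2| := abs_add_le _ _
        _ < 2 := by rw [he_abs, abs_div, abs_two]; linarith
    · rw [Fin.val_zero, Function.iterate_zero_apply, he]
      split_ifs <;> linarith
    · rw [Fin.val_succ, Function.iterate_succ_apply, hstep]
      exact htw k

lemma zero_mem_closure_signDom (n : ℕ) (w : Fin n → Bool) :
    ((0, 0) : ℝ × ℝ) ∈ closure (signDom n w) := by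
  obtain ⟨s, hs, hsw⟩ := exists_signDoubling_itinerary n w
  have hcurve : Tendsto (fun x : ℝ => (x, 2 * x ^ 2 * s)) (𝓝[>] 0) (𝓝 (0, 0)) := by
    have : Continuous fun x : ℝ => (x, 2 * x ^ 2 * s) := by fun_prop
    simpa using (this.tendsto 0).mono_left nhdsWithin_le_nhds
  refine mem_closure_of_tendsto hcurve ?_
  filter_upwards [Ioc_mem_nhdsGT (by norm_num : (0 : ℝ) < 1 / 2)] with x ⟨hx₀, hx₁⟩
  refine ⟨by rw [abs_of_pos hx₀]; linarith, ?_, fun k => ?_⟩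
  · rw [abs_mul, abs_of_pos (by positivity : (0 : ℝ) < 2 * x ^ 2)]
    nlinarith [abs_nonneg s]
  · have hscale : 0 < 2 * (x / 2 ^ (k : ℕ)) ^ 2 := by positivity
    have hk := hsw k
    rw [fBuzzi_iterate_parabola hx₀.ne']
    split_ifs at hk ⊢
    · exact mul_pos hscale hk
    · exact mul_neg_of_pos_of_neg hscale hk

lemma card_signDom_closure_zero (n : ℕ) :
    Nat.card {w : Fin n → Bool | ((0, 0) : ℝ × ℝ) ∈ closure (signDom n w)} = 2 ^ n := by
  have hall : {w : Fin n → Bool | ((0, 0) : ℝ × ℝ) ∈ closure (signDom n w)} = Set.univ :=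
    Set.eq_univ_of_forall (zero_mem_closure_signDom n)
  rw [hall, Nat.card_univ, Nat.card_eq_fintype_card,
    Fintype.card_fun, Fintype.card_bool, Fintype.card_fin]

/-- The `n`-th iterate of `f` has first coordinate `x/2ⁿ`; the number of
continuity domains of `f^n` whose closure contains the origin is `2ⁿ` for every `n ≥ 1`; hence
the multiplicity entropy of `f` equals `log 2`. -/
theorem fBuzzi_multiplicity :
    (∀ (p : ℝ × ℝ) (n : ℕ), (fBuzzi^[n] p).1 = p.1 / 2 ^ n) ∧
    (∀ n : ℕ, 1 ≤ n →
      Nat.card {w : Fin n → Bool | ((0, 0) : ℝ × ℝ) ∈ closure (signDom n w)} = 2 ^ n) ∧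
    Filter.Tendsto
      (fun n : ℕ => Real.log
          (Nat.card {w : Fin n → Bool | ((0, 0) : ℝ × ℝ) ∈ closure (signDom n w)}) / n)
      Filter.atTop (nhds (Real.log 2)) := by
  refine ⟨fBuzzi_iterate_fst, fun n _ => card_signDom_closure_zero n, ?_⟩
  refine tendsto_const_nhds.congr' ?_
  filter_upwards [eventually_ne_atTop 0] with n hn
  rw [card_signDom_closure_zero, Nat.cast_pow, Nat.cast_ofNat, Real.log_pow,
    mul_div_cancel_left₀ _ (Nat.cast_ne_zero.mpr hn)]
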